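/- Types of basis terms and of the null vector: (1) for any basis term b (a variable or an abstraction), context Γ and Scalar type T, if Γ ⊢ b : T then there exists a unit type U with T ≡ U; (2) for any context Γ and Scalar type T, if Γ ⊢ 0 : T then T ≡ 0̄. -/

import Mathlib

set_option autoImplicit false

namespace Lineal

/-! ### Lineal terms -/

inductive Trm (S : Type) : Type where
  | var : ℕ → Trm S
  | lam : Trm S → Trm S
  | app : Trm S → Trm S → Trm S
  | zero : Trm S
  | smul : S → Trm S → Trm S
  | add : Trm S → Trm S → Trm S

namespace Trm

variable {S : Type}

/-- Basis terms: variables and abstractions. -/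
def IsBasis : Trm S → Prop
  | var _ => True
  | lam _ => True
  | _ => False

/-- de Bruijn shift by `d` of variables `≥ c`. -/
def shift (d : ℕ) : ℕ → Trm S → Trm S
  | c, var k => if k < c then var k else var (k + d)
  | c, lam t => lam (shift d (c + 1) t)
  | c, app t r => app (shift d c t) (shift d c r)
  | _, zero => zero
  | c, smul a t => smul a (shift d c t)
  | c, add t r => add (shift d c t) (shift d c r)

/-- Capture-avoiding substitution `t[s / j]` (de Bruijn). -/
def subst : Trm S → Trm S → ℕ → Trm S
  | var k, s, j => if k = j then s else if j < k then var (k - 1) else var k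
  | lam t, s, j => lam (subst t (shift 1 0 s) (j + 1))
  | app t r, s, j => app (subst t s j) (subst r s j)
  | zero, _, _ => zero
  | smul a t, s, j => smul a (subst t s j)
  | add t r, s, j => add (subst t s j) (subst r s j)

/-- All free variables are `< n`. -/
def ClosedUnder : ℕ → Trm S → Prop
  | n, var k => k < n
  | n, lam t => ClosedUnder (n + 1) t
  | n, app t r => ClosedUnder n t ∧ ClosedUnder n r
  | _, zero => True
  | n, smul _ t => ClosedUnder n t
  | n, add t r => ClosedUnder n t ∧ ClosedUnder n r

/-- Closed terms. -/
def Closed (t : Trm S) : Prop := ClosedUnder 0 t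

def size : Trm S → ℕ
  | var _ => 1
  | lam t => size t + 1
  | app t r => size t + size r + 1
  | zero => 1
  | smul _ t => size t + 1
  | add t r => size t + size r + 1

/-- `(t) r₁ … rₙ`. -/
def appList (t : Trm S) (l : List (Trm S)) : Trm S := l.foldl app t

/-- `t + u₁ + … + uₙ`. -/
def sumList (t : Trm S) (l : List (Trm S)) : Trm S := l.foldl add t

/-- Lifting of a simultaneous substitution under a binder. -/
def msubstLift (ρ : ℕ → Trm S) : ℕ → Trm S
  | 0 => var 0
  | n + 1 => shift 1 0 (ρ n)

/-- Simultaneous substitution of all free variables. -/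
def msubst : (ℕ → Trm S) → Trm S → Trm S
  | ρ, var k => ρ k
  | ρ, lam t => lam (msubst (msubstLift ρ) t)
  | ρ, app t r => app (msubst ρ t) (msubst ρ r)
  | _, zero => zero
  | ρ, smul a t => smul a (msubst ρ t)
  | ρ, add t r => add (msubst ρ t) (msubst ρ r)

end Trm

/-! ### AC equivalence of terms (`+` associative and commutative) -/

inductive ACeq {S : Type} : Trm S → Trm S → Prop
  | refl (t : Trm S) : ACeq t t
  | symm {t u : Trm S} : ACeq t u → ACeq u t
  | trans {t u v : Trm S} : ACeq t u → ACeq u v → ACeq t v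
  | comm (t u : Trm S) : ACeq (Trm.add t u) (Trm.add u t)
  | assoc (t u v : Trm S) : ACeq (Trm.add (Trm.add t u) v) (Trm.add t (Trm.add u v))
  | lamCong {t t' : Trm S} : ACeq t t' → ACeq (Trm.lam t) (Trm.lam t')
  | appCong {t t' r r' : Trm S} : ACeq t t' → ACeq r r' → ACeq (Trm.app t r) (Trm.app t' r')
  | smulCong (a : S) {t t' : Trm S} : ACeq t t' → ACeq (Trm.smul a t) (Trm.smul a t')
  | addCong {t t' r r' : Trm S} : ACeq t t' → ACeq r r' → ACeq (Trm.add t r) (Trm.add t' r')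

/-! ### Reduction -/

/-- `t` is closed and normal (w.r.t. the step relation `St`). -/
def ClosedNormal {S : Type} (St : Trm S → Trm S → Prop) (t : Trm S) : Prop :=
  t.Closed ∧ ∀ u, ¬ St t u

/-- Root rules and one-level contextual closure, parameterised by the step relation `St`
used on proper subterms (both for congruence and for the closed-normal side conditions). -/
inductive Core {S : Type} [CommRing S] (St : Trm S → Trm S → Prop) : Trm S → Trm S → Prop
  -- Elementary rules
  | addZero (t : Trm S) : Core St (Trm.add t Trm.zero) t
  | zeroSmul (t : Trm S) : Core St (Trm.smul 0 t) Trm.zero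
  | oneSmul (t : Trm S) : Core St (Trm.smul 1 t) t
  | smulZero (a : S) : Core St (Trm.smul a Trm.zero) Trm.zero
  | smulSmul (a b : S) (t : Trm S) : Core St (Trm.smul a (Trm.smul b t)) (Trm.smul (a * b) t)
  | smulAdd (a : S) (t r : Trm S) :
      Core St (Trm.smul a (Trm.add t r)) (Trm.add (Trm.smul a t) (Trm.smul a r))
  -- Factorisation rules (side condition : t closed normal)
  | fact1 (a b : S) (t : Trm S) : ClosedNormal St t →
      Core St (Trm.add (Trm.smul a t) (Trm.smul b t)) (Trm.smul (a + b) t)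
  | fact2 (a : S) (t : Trm S) : ClosedNormal St t →
      Core St (Trm.add (Trm.smul a t) t) (Trm.smul (a + 1) t)
  | fact3 (t : Trm S) : ClosedNormal St t →
      Core St (Trm.add t t) (Trm.smul (1 + 1) t)
  -- Application rules
  | appAddL (t r u : Trm S) : ClosedNormal St (Trm.add t r) →
      Core St (Trm.app (Trm.add t r) u) (Trm.add (Trm.app t u) (Trm.app r u))
  | appAddR (u t r : Trm S) : ClosedNormal St (Trm.add t r) →
      Core St (Trm.app u (Trm.add t r)) (Trm.add (Trm.app u t) (Trm.app u r))
  | appSmulL (a : S) (t r : Trm S) : ClosedNormal St t →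
      Core St (Trm.app (Trm.smul a t) r) (Trm.smul a (Trm.app t r))
  | appSmulR (a : S) (r t : Trm S) : ClosedNormal St t →
      Core St (Trm.app r (Trm.smul a t)) (Trm.smul a (Trm.app r t))
  | appZeroL (t : Trm S) : Core St (Trm.app Trm.zero t) Trm.zero
  | appZeroR (t : Trm S) : Core St (Trm.app t Trm.zero) Trm.zero
  -- Beta reduction (b a basis term)
  | beta (t b : Trm S) : Trm.IsBasis b → Core St (Trm.app (Trm.lam t) b) (Trm.subst t b 0)
  -- Contextual closure
  | lamCong {t t' : Trm S} : St t t' → Core St (Trm.lam t) (Trm.lam t')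
  | appL {t t' : Trm S} (r : Trm S) : St t t' → Core St (Trm.app t r) (Trm.app t' r)
  | appR (t : Trm S) {r r' : Trm S} : St r r' → Core St (Trm.app t r) (Trm.app t r')
  | smulCong (a : S) {t t' : Trm S} : St t t' → Core St (Trm.smul a t) (Trm.smul a t')
  | addL {t t' : Trm S} (r : Trm S) : St t t' → Core St (Trm.add t r) (Trm.add t' r)
  | addR (t : Trm S) {r r' : Trm S} : St r r' → Core St (Trm.add t r) (Trm.add t r')

/-- Stratified step relation: `StepN n` is the one-step reduction (modulo AC),
adequate for terms of size at most `n`. -/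
def StepN {S : Type} [CommRing S] : ℕ → Trm S → Trm S → Prop
  | 0, _, _ => False
  | n + 1, t, t' => ∃ u u', ACeq t u ∧ Core (StepN n) u u' ∧ ACeq u' t'

/-- One-step reduction of Lineal, on terms considered modulo AC of `+`. -/
def Step {S : Type} [CommRing S] (t t' : Trm S) : Prop := StepN t.size t t'

/-- Many-step reduction. -/
def RedStar {S : Type} [CommRing S] : Trm S → Trm S → Prop := Relation.ReflTransGen Step

/-- `t` is strongly normalising: every reduction sequence from `t` is finite. -/
def StronglyNormalising {S : Type} [CommRing S] (t : Trm S) : Prop :=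
  Acc (fun a b => Step b a) t

/-- The set of strongly normalising terms. -/
def SNset (S : Type) [CommRing S] : Set (Trm S) := { t | StronglyNormalising t }

end Lineal

namespace Lineal

/-! ### Scalar types -/

inductive STy (S : Type) : Type where
  | var : ℕ → STy S
  | arrow : STy S → STy S → STy S
  | all : STy S → STy S
  | smul : S → STy S → STy S
  | zero : STy S

namespace STy

mutual
  /-- Unit types: `U ::= X | U → T | ∀X.U`. -/
  inductive IsUnit {S : Type} : STy S → Prop
    | var (n : ℕ) : IsUnit (STy.var n)
    | arrow {U T : STy S} : IsUnit U → WF T → IsUnit (STy.arrow U T)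
    | all {U : STy S} : IsUnit U → IsUnit (STy.all U)
  /-- Scalar types: `T ::= U | ∀X.T | α.T | 0̄`. -/
  inductive WF {S : Type} : STy S → Prop
    | unit {U : STy S} : IsUnit U → WF U
    | all {T : STy S} : WF T → WF (STy.all T)
    | smul (a : S) {T : STy S} : WF T → WF (STy.smul a T)
    | zero : WF STy.zero
end

variable {S : Type}

/-- de Bruijn shift of type variables. -/
def shiftTV (d : ℕ) : ℕ → STy S → STy S
  | c, var k => if k < c then var k else var (k + d)
  | c, arrow A B => arrow (shiftTV d c A) (shiftTV d c B)
  | c, all T => all (shiftTV d (c + 1) T)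
  | c, smul a T => smul a (shiftTV d c T)
  | _, zero => zero

/-- `T[U / j]`: capture-avoiding substitution for the type variable `j` (removing it). -/
def substTV : STy S → STy S → ℕ → STy S
  | var k, U, j => if k = j then shiftTV j 0 U else if j < k then var (k - 1) else var k
  | arrow A B, U, j => arrow (substTV A U j) (substTV B U j)
  | all T, U, j => all (substTV T U (j + 1))
  | smul a T, U, j => smul a (substTV T U j)
  | zero, _, _ => zero

/-- Abstract the free type variable `n` of `T` (at depth `c`), so that
`all (closeTV T n 0)` is `∀X.T` where `X` is the free variable `n`. -/
def closeTV : STy S → ℕ → ℕ → STy S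
  | var k, n, c => if k < c then var k else if k = n + c then var c else var (k + 1)
  | arrow A B, n, c => arrow (closeTV A n c) (closeTV B n c)
  | all T, n, c => all (closeTV T n (c + 1))
  | smul a T, n, c => smul a (closeTV T n c)
  | zero, _, _ => zero

/-- `T[U / X]` for a *free* type variable named `n` (no binder is removed). -/
def substFreeAux : STy S → ℕ → STy S → ℕ → STy S
  | var k, n, U, c => if k = n + c then shiftTV c 0 U else var k
  | arrow A B, n, U, c => arrow (substFreeAux A n U c) (substFreeAux B n U c)
  | all T, n, U, c => all (substFreeAux T n U (c + 1))
  | smul a T, n, U, c => smul a (substFreeAux T n U c)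
  | zero, _, _, _ => zero

def substFree (T : STy S) (n : ℕ) (U : STy S) : STy S := substFreeAux T n U 0

/-- Free type variables. -/
def ftvAux : STy S → ℕ → Finset ℕ
  | var k, c => if k < c then ∅ else {k - c}
  | arrow A B, c => ftvAux A c ∪ ftvAux B c
  | all T, c => ftvAux T (c + 1)
  | smul _ T, c => ftvAux T c
  | zero, _ => ∅

def ftv (T : STy S) : Finset ℕ := ftvAux T 0

end STy

/-- Free type variables of a context. -/
def ftvCtx {S : Type} (Γ : List (STy S)) : Finset ℕ :=
  Γ.foldr (fun T s => T.ftv ∪ s) ∅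

/-- Type equivalence `≡`: the least congruence with
`α.0̄ ≡ 0̄`, `0.T ≡ 0̄`, `1.T ≡ T`, `α.(β.T) ≡ (α×β).T`, `∀X.α.T ≡ α.∀X.T`. -/
inductive SEq {S : Type} [CommRing S] : STy S → STy S → Prop
  | refl (T : STy S) : SEq T T
  | symm {T T' : STy S} : SEq T T' → SEq T' T
  | trans {T T' T'' : STy S} : SEq T T' → SEq T' T'' → SEq T T''
  | smulZero (a : S) : SEq (STy.smul a STy.zero) STy.zero
  | zeroSmul (T : STy S) : SEq (STy.smul 0 T) STy.zero
  | oneSmul (T : STy S) : SEq (STy.smul 1 T) T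
  | smulSmul (a b : S) (T : STy S) : SEq (STy.smul a (STy.smul b T)) (STy.smul (a * b) T)
  | allSmul (a : S) (T : STy S) : SEq (STy.all (STy.smul a T)) (STy.smul a (STy.all T))
  | arrowCong {U U' T T' : STy S} : SEq U U' → SEq T T' → SEq (STy.arrow U T) (STy.arrow U' T')
  | allCong {T T' : STy S} : SEq T T' → SEq (STy.all T) (STy.all T')
  | smulCong (a : S) {T T' : STy S} : SEq T T' → SEq (STy.smul a T) (STy.smul a T')

/-- `T ≺ R` iff either `R ≡ ∀X.T`, or `T ≡ ∀X.S` and `R ≡ S[U/X]` for some unit type `U`. -/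
def Prec {S : Type} [CommRing S] (T R : STy S) : Prop :=
  (∃ n : ℕ, SEq R (STy.all (STy.closeTV T n 0))) ∨
  (∃ Sb U : STy S, STy.IsUnit U ∧ SEq T (STy.all Sb) ∧ SEq R (STy.substTV Sb U 0))

/-- `⪯` : reflexive and transitive closure of `≺`. -/
def PrecEq {S : Type} [CommRing S] : STy S → STy S → Prop := Relation.ReflTransGen Prec

/-! ### The Scalar typing judgment -/

inductive Typ {S : Type} [CommRing S] : List (STy S) → Trm S → STy S → Prop
  | ax {Γ : List (STy S)} {n : ℕ} {U : STy S} : Γ[n]? = some U → Typ Γ (Trm.var n) U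
  | equiv {Γ : List (STy S)} {t : Trm S} {T T' : STy S} : Typ Γ t T → SEq T T' → Typ Γ t T'
  | arrE {Γ : List (STy S)} {t r : Trm S} {U T : STy S} {a b : S} :
      Typ Γ t (STy.smul a (STy.arrow U T)) → Typ Γ r (STy.smul b U) →
      Typ Γ (Trm.app t r) (STy.smul (a * b) T)
  | arrI {Γ : List (STy S)} {t : Trm S} {U T : STy S} :
      STy.IsUnit U → Typ (U :: Γ) t T → Typ Γ (Trm.lam t) (STy.arrow U T)
  | allE {Γ : List (STy S)} {t : Trm S} {T U : STy S} :
      Typ Γ t (STy.all T) → STy.IsUnit U → Typ Γ t (STy.substTV T U 0)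
  | allI {Γ : List (STy S)} {t : Trm S} {T : STy S} :
      Typ (Γ.map (STy.shiftTV 1 0)) t T → Typ Γ t (STy.all T)
  | ax0 {Γ : List (STy S)} : Typ Γ Trm.zero STy.zero
  | addI {Γ : List (STy S)} {t r : Trm S} {T : STy S} {a b : S} :
      Typ Γ t (STy.smul a T) → Typ Γ r (STy.smul b T) →
      Typ Γ (Trm.add t r) (STy.smul (a + b) T)
  | smulI {Γ : List (STy S)} {t : Trm S} {T : STy S} (a : S) :
      Typ Γ t T → Typ Γ (Trm.smul a t) (STy.smul a T)

/-! ### λ2^la -/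

inductive FTy : Type where
  | var : ℕ → FTy
  | arrow : FTy → FTy → FTy
  | all : FTy → FTy

namespace FTy

def shiftTV (d : ℕ) : ℕ → FTy → FTy
  | c, var k => if k < c then var k else var (k + d)
  | c, arrow A B => arrow (shiftTV d c A) (shiftTV d c B)
  | c, all A => all (shiftTV d (c + 1) A)

def substTV : FTy → FTy → ℕ → FTy
  | var k, B, j => if k = j then shiftTV j 0 B else if j < k then var (k - 1) else var k
  | arrow A C, B, j => arrow (substTV A B j) (substTV C B j)
  | all A, B, j => all (substTV A B (j + 1))

end FTy

/-- The typing judgment of λ2^la : System F rules over Lineal terms plus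
`ax0`, `+I` and `sI`. -/
inductive FTyp {S : Type} [CommRing S] : List FTy → Trm S → FTy → Prop
  | ax {Γ : List FTy} {n : ℕ} {A : FTy} : Γ[n]? = some A → FTyp Γ (Trm.var n) A
  | arrE {Γ : List FTy} {t r : Trm S} {A B : FTy} :
      FTyp Γ t (FTy.arrow A B) → FTyp Γ r A → FTyp Γ (Trm.app t r) B
  | arrI {Γ : List FTy} {t : Trm S} {A B : FTy} :
      FTyp (A :: Γ) t B → FTyp Γ (Trm.lam t) (FTy.arrow A B)
  | allE {Γ : List FTy} {t : Trm S} {A : FTy} (B : FTy) :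
      FTyp Γ t (FTy.all A) → FTyp Γ t (FTy.substTV A B 0)
  | allI {Γ : List FTy} {t : Trm S} {A : FTy} :
      FTyp (Γ.map (FTy.shiftTV 1 0)) t A → FTyp Γ t (FTy.all A)
  | ax0 {Γ : List FTy} (A : FTy) : FTyp Γ Trm.zero A
  | addI {Γ : List FTy} {t r : Trm S} {A : FTy} :
      FTyp Γ t A → FTyp Γ r A → FTyp Γ (Trm.add t r) A
  | smulI {Γ : List FTy} {t : Trm S} {A : FTy} (a : S) :
      FTyp Γ t A → FTyp Γ (Trm.smul a t) A

/-! ### Saturated sets and the interpretation of λ2^la types -/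

/-- Saturated subsets of SN. -/
structure IsSaturated {S : Type} [CommRing S] (X : Set (Trm S)) : Prop where
  subset_sn : X ⊆ SNset S
  var_app : ∀ (n : ℕ) (l : List (Trm S)), (∀ u ∈ l, u ∈ SNset S) →
      Trm.appList (Trm.var n) l ∈ X
  beta_exp : ∀ (v b : Trm S) (l : List (Trm S)), b.IsBasis →
      Trm.appList (Trm.subst v b 0) l ∈ X → Trm.appList (Trm.app (Trm.lam v) b) l ∈ X
  add_mem : ∀ {t u : Trm S}, t ∈ X → u ∈ X → Trm.add t u ∈ X
  smul_iff : ∀ (a : S) (t : Trm S), t ∈ X ↔ Trm.smul a t ∈ X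
  sum_app : ∀ (u : Trm S) (us l : List (Trm S)),
      (∀ v ∈ u :: us, Trm.appList v l ∈ X) → Trm.appList (Trm.sumList u us) l ∈ X
  app_sum : ∀ (t v : Trm S) (vs l : List (Trm S)),
      (∀ w ∈ v :: vs, Trm.appList (Trm.app t w) l ∈ X) →
      Trm.appList (Trm.app t (Trm.sumList v vs)) l ∈ X
  smul_head : ∀ (a : S) (t : Trm S) (l : List (Trm S)),
      Trm.smul a (Trm.appList t l) ∈ X ↔ Trm.appList (Trm.smul a t) l ∈ X
  smul_arg : ∀ (a : S) (t : Trm S) (l₁ : List (Trm S)) (u : Trm S) (l₂ : List (Trm S)),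
      Trm.smul a (Trm.appList t (l₁ ++ u :: l₂)) ∈ X ↔
      Trm.appList t (l₁ ++ Trm.smul a u :: l₂) ∈ X
  zero_mem : Trm.zero ∈ X
  zero_app : ∀ l : List (Trm S), (∀ u ∈ l, u ∈ SNset S) → Trm.appList Trm.zero l ∈ X
  app_zero : ∀ (t : Trm S) (l : List (Trm S)), t ∈ SNset S → (∀ u ∈ l, u ∈ SNset S) →
      Trm.appList (Trm.app t Trm.zero) l ∈ X

/-- Extension of a type-variable valuation (de Bruijn). -/
def consVal {S : Type} (Y : Set (Trm S)) (ξ : ℕ → Set (Trm S)) : ℕ → Set (Trm S)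
  | 0 => Y
  | n + 1 => ξ n

/-- Interpretation `⟦A⟧_ξ` of a λ2^la type. -/
def FTy.interp {S : Type} [CommRing S] : FTy → (ℕ → Set (Trm S)) → Set (Trm S)
  | FTy.var n, ξ => ξ n
  | FTy.arrow A B, ξ => { F | ∀ s ∈ interp A ξ, Trm.app F s ∈ interp B ξ }
  | FTy.all A, ξ => ⋂ Y ∈ { X : Set (Trm S) | IsSaturated X }, interp A (consVal Y ξ)

/-- `ρ, ξ ⊨ Γ`. -/
def SatCtx {S : Type} [CommRing S] (ρ : ℕ → Trm S) (ξ : ℕ → Set (Trm S))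
    (Γ : List FTy) : Prop :=
  ∀ (n : ℕ) (A : FTy), Γ[n]? = some A → ρ n ∈ FTy.interp A ξ

/-- The `♮` map erasing scalars, sending `0̄` to a fixed λ2^la type `A`. -/
def STy.flat {S : Type} (A : FTy) : STy S → FTy
  | STy.var n => FTy.var n
  | STy.arrow U T => FTy.arrow (flat A U) (flat A T)
  | STy.all T => FTy.all (flat A T)
  | STy.smul _ T => flat A T
  | STy.zero => A

end Lineal
/-!
The relation `≡` only moves and multiplies scalars, so two things are `≡`-invariant: the
product `scalar T` of the outer scalars of `T`, and whether `T` has the shape of a scalar type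
once its scalars are erased (`ScalarShaped`). The typing rules preserve that shape and give a
basis term the scalar `1` and the null vector the scalar `0`. Finally a scalar-shaped type is
equivalent to `α.U` with `U` a unit type and `α` its scalar, and every type whose scalar
vanishes is equivalent to `0̄`.
-/

namespace Lineal

namespace STy

variable {S : Type} [CommRing S]

def scalar : STy S → S
  | var _ => 1
  | arrow _ _ => 1
  | all T => scalar T
  | smul a T => a * scalar T
  | zero => 0

/-- An `≡`-invariant relaxation of `IsUnit`: scalars are ignored, except that an arrow's domain
must have scalar `1`, and a subterm whose scalar vanishes stands for `0̄`. -/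
def UnitShaped : STy S → Prop
  | var _ => True
  | arrow A B =>
    scalar A = 1 ∧ (scalar A = 0 ∨ UnitShaped A) ∧ (scalar B = 0 ∨ UnitShaped B)
  | all T => UnitShaped T
  | smul _ T => UnitShaped T
  | zero => False

def ScalarShaped (T : STy S) : Prop := scalar T = 0 ∨ UnitShaped T

theorem unitShaped_arrow {A B : STy S} :
    UnitShaped (arrow A B) ↔ scalar A = 1 ∧ ScalarShaped A ∧ ScalarShaped B :=
  Iff.rfl

theorem scalarShaped_arrow {A B : STy S} :
    ScalarShaped (arrow A B) ↔
      (1 : S) = 0 ∨ scalar A = 1 ∧ ScalarShaped A ∧ ScalarShaped B :=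
  Iff.rfl

theorem scalarShaped_all {T : STy S} : ScalarShaped (all T) ↔ ScalarShaped T :=
  Iff.rfl

theorem scalarShaped_smul_iff {a : S} {T : STy S} :
    ScalarShaped (smul a T) ↔ a * scalar T = 0 ∨ UnitShaped T :=
  Iff.rfl

theorem ScalarShaped.smul (a : S) {T : STy S} (h : ScalarShaped T) :
    ScalarShaped (smul a T) := by
  rcases h with h | h
  · exact Or.inl (by simp [scalar, h])
  · exact Or.inr h

theorem scalarShaped_smul_congr (a : S) {T T' : STy S} (hs : scalar T = scalar T')
    (h : ScalarShaped T ↔ ScalarShaped T') :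
    ScalarShaped (smul a T) ↔ ScalarShaped (smul a T') := by
  by_cases h0 : scalar T = 0
  · simp [scalarShaped_smul_iff, ← hs, h0]
  · have h0' : scalar T' ≠ 0 := hs ▸ h0
    simp only [ScalarShaped, h0, h0', false_or] at h
    simp only [scalarShaped_smul_iff, hs, h]

theorem scalar_shiftTV (d c : ℕ) (T : STy S) : scalar (shiftTV d c T) = scalar T := by
  induction T generalizing c with
  | var k => unfold shiftTV; split <;> rfl
  | _ => simp_all [shiftTV, scalar]

theorem unitShaped_shiftTV (d c : ℕ) (T : STy S) :
    UnitShaped (shiftTV d c T) ↔ UnitShaped T := by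
  induction T generalizing c with
  | var k => unfold shiftTV; split <;> rfl
  | _ => simp_all [shiftTV, UnitShaped, scalar_shiftTV]

theorem scalar_substTV {U : STy S} (hU : scalar U = 1) (T : STy S) (j : ℕ) :
    scalar (substTV T U j) = scalar T := by
  induction T generalizing j with
  | var k =>
    unfold substTV
    split
    · rw [scalar_shiftTV, hU]; rfl
    · split <;> rfl
  | _ => simp_all [substTV, scalar]

theorem unitShaped_substTV {U : STy S} (hU : scalar U = 1) (hU' : UnitShaped U) (T : STy S)
    (j : ℕ) : UnitShaped (substTV T U j) ↔ UnitShaped T := by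
  induction T generalizing j with
  | var k =>
    unfold substTV
    split
    · exact ⟨fun _ => trivial, fun _ => (unitShaped_shiftTV j 0 U).2 hU'⟩
    · split <;> rfl
  | _ => simp_all [substTV, UnitShaped, scalar_substTV hU]

theorem scalarShaped_substTV {U : STy S} (hU : scalar U = 1) (hU' : UnitShaped U) (T : STy S)
    (j : ℕ) : ScalarShaped (substTV T U j) ↔ ScalarShaped T := by
  simp only [ScalarShaped, scalar_substTV hU, unitShaped_substTV hU hU']

mutual
theorem IsUnit.scalar_eq_one_and_unitShaped :
    ∀ {U : STy S}, IsUnit U → scalar U = 1 ∧ UnitShaped U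
  | _, .var _ => ⟨rfl, trivial⟩
  | _, .arrow hU hT =>
    ⟨rfl, (IsUnit.scalar_eq_one_and_unitShaped hU).1,
      Or.inr (IsUnit.scalar_eq_one_and_unitShaped hU).2, WF.scalarShaped hT⟩
  | _, .all hU => (IsUnit.scalar_eq_one_and_unitShaped hU :)

theorem WF.scalarShaped : ∀ {T : STy S}, WF T → ScalarShaped T
  | _, .unit hU => Or.inr (IsUnit.scalar_eq_one_and_unitShaped hU).2
  | _, .all hT => (WF.scalarShaped hT :)
  | _, .smul a hT => (WF.scalarShaped hT).smul a
  | _, .zero => Or.inl rfl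
end

end STy

open STy

section

variable {S : Type} [CommRing S]

theorem SEq.scalar_eq_and_scalarShaped_iff {T T' : STy S} (h : SEq T T') :
    scalar T = scalar T' ∧ (ScalarShaped T ↔ ScalarShaped T') := by
  induction h with
  | refl => exact ⟨rfl, Iff.rfl⟩
  | symm _ ih => exact ⟨ih.1.symm, ih.2.symm⟩
  | trans _ _ ih ih' => exact ⟨ih.1.trans ih'.1, ih.2.trans ih'.2⟩
  | smulZero a => simp [ScalarShaped, scalar]
  | zeroSmul T => simp [ScalarShaped, scalar]
  | oneSmul T => simp [ScalarShaped, scalar, UnitShaped]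
  | smulSmul a b T => simp [ScalarShaped, scalar, UnitShaped, mul_assoc]
  | allSmul a T => simp [ScalarShaped, scalar, UnitShaped]
  | arrowCong _ _ ihU ihT =>
    simp [scalar, scalarShaped_arrow, ihU.1, ihU.2, ihT.2]
  | allCong _ ih => exact ih
  | smulCong a _ ih =>
    exact ⟨by simp [scalar, ih.1], scalarShaped_smul_congr a ih.1 ih.2⟩

theorem Typ.scalarShaped {Γ : List (STy S)} {t : Trm S} {T : STy S} (h : Typ Γ t T)
    (hΓ : ∀ U ∈ Γ, scalar U = 1 ∧ UnitShaped U) : ScalarShaped T := by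
  induction h with
  | ax hget => exact Or.inr (hΓ _ (List.mem_of_getElem? hget)).2
  | equiv _ e ih => exact (e.scalar_eq_and_scalarShaped_iff.2).1 (ih hΓ)
  | @arrE _ _ _ U T a b _ _ ih _ =>
    rcases ih hΓ with ha | ⟨-, -, hT⟩
    · exact Or.inl (by simp_all [scalar])
    · exact ScalarShaped.smul (a * b) hT
  | arrI hU _ ih =>
    have hU' := hU.scalar_eq_one_and_unitShaped
    refine Or.inr ⟨hU'.1, Or.inr hU'.2, ih ?_⟩
    intro V hV
    rcases List.mem_cons.1 hV with rfl | hV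
    exacts [hU', hΓ V hV]
  | allE _ hU ih =>
    have hU' := hU.scalar_eq_one_and_unitShaped
    exact (scalarShaped_substTV hU'.1 hU'.2 _ 0).2 (ih hΓ)
  | allI _ ih =>
    refine scalarShaped_all.2 (ih ?_)
    simp only [List.mem_map, forall_exists_index, and_imp, forall_apply_eq_imp_iff₂]
    exact fun V hV => by simpa [scalar_shiftTV, unitShaped_shiftTV] using hΓ V hV
  | ax0 => exact Or.inl rfl
  | @addI _ _ _ T a b _ _ iht ihr =>
    rcases iht hΓ with ha | hT
    · rcases ihr hΓ with hb | hT
      · exact Or.inl (by simp only [scalar] at ha hb ⊢; rw [add_mul, ha, hb, add_zero])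
      · exact Or.inr hT
    · exact Or.inr hT
  | smulI a _ ih => exact (ih hΓ).smul a

theorem Typ.scalar_eq_one {Γ : List (STy S)} {t : Trm S} {T : STy S} (h : Typ Γ t T)
    (hΓ : ∀ U ∈ Γ, scalar U = 1) (hb : t.IsBasis) : scalar T = 1 := by
  induction h with
  | ax hget => exact hΓ _ (List.mem_of_getElem? hget)
  | equiv _ e ih => exact e.scalar_eq_and_scalarShaped_iff.1 ▸ ih hΓ hb
  | arrI => rfl
  | allE _ hU ih => exact (scalar_substTV hU.scalar_eq_one_and_unitShaped.1 _ 0).trans (ih hΓ hb)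
  | allI _ ih => exact ih (by simpa [scalar_shiftTV] using hΓ) hb
  | arrE | ax0 | addI | smulI => exact hb.elim

theorem Typ.scalar_eq_zero {Γ : List (STy S)} {t : Trm S} {T : STy S} (h : Typ Γ t T)
    (ht : t = Trm.zero) : scalar T = 0 := by
  induction h with
  | equiv _ e ih => exact e.scalar_eq_and_scalarShaped_iff.1 ▸ ih ht
  | allE _ hU ih => exact (scalar_substTV hU.scalar_eq_one_and_unitShaped.1 _ 0).trans (ih ht)
  | allI _ ih => exact ih ht
  | ax0 => rfl
  | ax | arrE | arrI | addI | smulI => cases ht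

theorem SEq.of_one_eq_zero (h : (1 : S) = 0) (T T' : STy S) : SEq T T' :=
  have collapse : ∀ R : STy S, SEq R STy.zero := fun R =>
    .trans (.symm (.oneSmul R)) (h ▸ .zeroSmul R)
  .trans (collapse T) (.symm (collapse T'))

theorem exists_seq_smul_scalar (T : STy S) : ∃ B, SEq T (.smul (scalar T) B) := by
  induction T with
  | var n => exact ⟨.var n, .symm (.oneSmul _)⟩
  | arrow A B => exact ⟨.arrow A B, .symm (.oneSmul _)⟩
  | all T ih =>
    obtain ⟨B, e⟩ := ih
    exact ⟨.all B, .trans (.allCong e) (.allSmul _ B)⟩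
  | smul a T ih =>
    obtain ⟨B, e⟩ := ih
    exact ⟨B, .trans (.smulCong a e) (.smulSmul a _ B)⟩
  | zero => exact ⟨.var 0, .symm (.zeroSmul _)⟩

theorem seq_zero_of_scalar_eq_zero {T : STy S} (h : scalar T = 0) : SEq T STy.zero := by
  obtain ⟨B, e⟩ := exists_seq_smul_scalar T
  exact .trans e (h ▸ .zeroSmul B)

theorem exists_wf_seq_of_scalarShaped {T : STy S} (hT : ScalarShaped T)
    (ih : UnitShaped T → ∃ U, STy.IsUnit U ∧ SEq T (.smul (scalar T) U)) :
    ∃ W, STy.WF W ∧ SEq T W := by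
  rcases hT with h0 | hT
  · exact ⟨.zero, .zero, seq_zero_of_scalar_eq_zero h0⟩
  · obtain ⟨U, hU, e⟩ := ih hT
    exact ⟨_, .smul _ (.unit hU), e⟩

theorem STy.UnitShaped.exists_isUnit_seq_smul {T : STy S} (hT : UnitShaped T) :
    ∃ U, STy.IsUnit U ∧ SEq T (.smul (scalar T) U) := by
  induction T with
  | var n => exact ⟨.var n, .var n, .symm (.oneSmul _)⟩
  | arrow A B ihA ihB =>
    obtain ⟨hA1, hA, hB⟩ := unitShaped_arrow.1 hT
    obtain ⟨W, hW, eB⟩ := exists_wf_seq_of_scalarShaped hB ihB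
    obtain ⟨U, hU, eA⟩ : ∃ U, STy.IsUnit U ∧ SEq A U := by
      rcases hA with h0 | hA
      · exact ⟨.var 0, .var 0, .of_one_eq_zero (hA1 ▸ h0) _ _⟩
      · obtain ⟨U, hU, e⟩ := ihA hA
        exact ⟨U, hU, .trans e (hA1 ▸ .oneSmul U)⟩
    exact ⟨.arrow U W, .arrow hU hW, .trans (.arrowCong eA eB) (.symm (.oneSmul _))⟩
  | all T ih =>
    obtain ⟨U, hU, e⟩ := ih hT
    exact ⟨.all U, .all hU, .trans (.allCong e) (.allSmul _ U)⟩
  | smul a T ih =>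
    obtain ⟨U, hU, e⟩ := ih hT
    exact ⟨U, hU, .trans (.smulCong a e) (.smulSmul a _ U)⟩
  | zero => exact hT.elim

end

/-- **Types of basis terms and of the null vector.**
(1) If `b` is a basis term and `Γ ⊢ b : T` then `T ≡ U` for some unit type `U`.
(2) If `Γ ⊢ 0 : T` then `T ≡ 0̄`. -/
theorem basis_and_zero_types {S : Type} [CommRing S] :
    (∀ (b : Trm S) (Γ : List (STy S)) (T : STy S),
      (∀ U ∈ Γ, STy.IsUnit U) → STy.WF T → Trm.IsBasis b → Typ Γ b T →
      ∃ U : STy S, STy.IsUnit U ∧ SEq T U) ∧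
    (∀ (Γ : List (STy S)) (T : STy S),
      (∀ U ∈ Γ, STy.IsUnit U) → STy.WF T → Typ Γ Trm.zero T → SEq T STy.zero) := by
  refine ⟨fun b Γ T hΓ _ hb ht => ?_,
    fun Γ T _ _ ht => seq_zero_of_scalar_eq_zero (ht.scalar_eq_zero rfl)⟩
  have hΓ' := fun U hU => (hΓ U hU).scalar_eq_one_and_unitShaped
  have h1 : scalar T = 1 := ht.scalar_eq_one (fun U hU => (hΓ' U hU).1) hb
  rcases ht.scalarShaped hΓ' with h0 | hT
  · exact ⟨.var 0, .var 0, .of_one_eq_zero (h1 ▸ h0) _ _⟩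
  · obtain ⟨U, hU, e⟩ := hT.exists_isUnit_seq_smul
    exact ⟨U, hU, .trans e (h1 ▸ .oneSmul U)⟩

end Lineal
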